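/- arXiv:2412.04630 — 3 statements merged into one kernel-verified Lean document; each statement's English description precedes it below -/
import Mathlib

section
/- Let $V$ be a finite-dimensional subspace of a Hilbert space, $\{B_a\}_{a}$ a family of symmetric bilinear forms depending linearly on a parameter $a$ in an open subset of a normed space, each satisfying $\alpha\|v\|^2 \le B_a(v,v) \le A\|v\|^2$ on $V$. Let $T(a) \in V$ denote the unique solution of $B_a(T(a), v) = f(v)$ for all $v \in V$. Then for any direction $b$, the Gateaux derivative $z = D T[a](b)$ exists and satisfies $B_a(z, v) = -B_b(T(a), v)$ for all $v \in V$; consequently $f(z) = -B_b(T(a), T(a))$. -/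
set_option synthInstance.maxHeartbeats 1000000
set_option maxHeartbeats 1000000


open Filter

/-- Finite-dimensional Lax–Milgram: a coercive bilinear form on a
finite-dimensional space solves any linear functional. -/
lemma exists_solution_of_coercive {E : Type*} [NormedAddCommGroup E]
    [NormedSpace ℝ E] [FiniteDimensional ℝ E]
    (L : E →ₗ[ℝ] E →ₗ[ℝ] ℝ) (α : ℝ) (hα : 0 < α)
    (hcoer : ∀ v : E, α * ‖v‖ ^ 2 ≤ L v v) (g : E →ₗ[ℝ] ℝ) :
    ∃ z : E, ∀ v : E, L z v = g v := by
  have hinj : Function.Injective L := by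
    rw [injective_iff_map_eq_zero]
    intro u hu
    have h1 : α * ‖u‖ ^ 2 ≤ L u u := hcoer u
    rw [hu] at h1
    simp only [LinearMap.zero_apply] at h1
    rcases eq_or_lt_of_le (norm_nonneg u) with h | h
    · exact norm_eq_zero.mp h.symm
    · exfalso; nlinarith [mul_pos hα (pow_pos h 2)]
  have hsurj : Function.Surjective L := by
    have hrange : LinearMap.range L = ⊤ := by
      apply Submodule.eq_top_of_finrank_eq
      rw [LinearMap.finrank_range_of_inj hinj]
      exact (Subspace.dual_finrank_eq (K := ℝ) (V := E)).symm
    intro y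
    exact (LinearMap.range_eq_top.mp hrange) y
  obtain ⟨z, hz⟩ := hsurj g
  exact ⟨z, fun v => by rw [hz]⟩


/-- Any bilinear form on a finite-dimensional normed space is bounded. -/
lemma exists_bound_of_bilinear {E : Type*} [NormedAddCommGroup E]
    [NormedSpace ℝ E] [FiniteDimensional ℝ E] (L : E →ₗ[ℝ] E →ₗ[ℝ] ℝ) :
    ∃ C : ℝ, 0 ≤ C ∧ ∀ v w : E, |L v w| ≤ C * ‖v‖ * ‖w‖ := by
  set Lb₁ : E →ₗ[ℝ] (E →L[ℝ] ℝ) :=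
    (LinearMap.toContinuousLinearMap : (E →ₗ[ℝ] ℝ) ≃ₗ[ℝ] (E →L[ℝ] ℝ)).toLinearMap.comp L
  set Lb₂ : E →L[ℝ] (E →L[ℝ] ℝ) := LinearMap.toContinuousLinearMap Lb₁
  refine ⟨‖Lb₂‖, ContinuousLinearMap.opNorm_nonneg _, fun v w => ?_⟩
  have h1 : ‖Lb₂ v w‖ ≤ ‖Lb₂‖ * ‖v‖ * ‖w‖ := Lb₂.le_opNorm₂ v w
  have h2 : Lb₂ v w = L v w := rfl
  rw [h2] at h1
  simpa [Real.norm_eq_abs] using h1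

/-- Lemma 5.1 of the paper: Gateaux differentiability of the discrete
design-to-state map when the bilinear form depends linearly on the coefficient. -/
theorem stmt_8
    {X P : Type*} [NormedAddCommGroup X] [InnerProductSpace ℝ X]
    [NormedAddCommGroup P] [NormedSpace ℝ P]
    (V : Submodule ℝ X) [FiniteDimensional ℝ V]
    (B : P →ₗ[ℝ] X →ₗ[ℝ] X →ₗ[ℝ] ℝ)
    (U : Set P) (hU : IsOpen U)
    (hsym : ∀ (c : P) (v w : X), B c v w = B c w v)
    (α A : ℝ) (hα : 0 < α) (hαA : α ≤ A)
    (hcoer : ∀ c ∈ U, ∀ v ∈ V, α * ‖v‖ ^ 2 ≤ B c v v ∧ B c v v ≤ A * ‖v‖ ^ 2)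
    (f : X →L[ℝ] ℝ)
    (T : P → X)
    (hTmem : ∀ c ∈ U, T c ∈ V)
    (hTeq : ∀ c ∈ U, ∀ v ∈ V, B c (T c) v = f v)
    (a : P) (ha : a ∈ U) (b : P) :
    ∃ z ∈ V,
      Tendsto (fun ε : ℝ => ε⁻¹ • (T (a + ε • b) - T a)) (nhdsWithin (0 : ℝ) {0}ᶜ)
        (nhds z) ∧
      (∀ v ∈ V, B a z v = -(B b (T a) v)) ∧
      f z = -(B b (T a) (T a)) := by
  classical
  have hTaV : T a ∈ V := hTmem a ha
  -- restricted bilinear forms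
  set La : ↥V →ₗ[ℝ] ↥V →ₗ[ℝ] ℝ := (B a).compl₁₂ V.subtype V.subtype with hLa
  set Lb : ↥V →ₗ[ℝ] ↥V →ₗ[ℝ] ℝ := (B b).compl₁₂ V.subtype V.subtype with hLb
  have hLa_apply : ∀ v w : ↥V, La v w = B a (v : X) (w : X) := fun v w => rfl
  have hLb_apply : ∀ v w : ↥V, Lb v w = B b (v : X) (w : X) := fun v w => rfl
  -- coercivity of La
  have hcoerV : ∀ v : ↥V, α * ‖v‖ ^ 2 ≤ La v v := by
    intro v
    have := (hcoer a ha (v : X) v.2).1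
    simpa [hLa_apply] using this
  -- existence of z
  obtain ⟨z₀, hz₀⟩ := exists_solution_of_coercive La α hα hcoerV
    (-((B b (T a)).comp V.subtype))
  set z : X := (z₀ : X) with hzdef
  have hzV : z ∈ V := z₀.2
  have hz : ∀ v ∈ V, B a z v = -(B b (T a) v) := by
    intro v hv
    have := hz₀ ⟨v, hv⟩
    simpa [hLa_apply] using this
  -- continuity bound for Lb on V
  obtain ⟨C, hC0, hC'⟩ := exists_bound_of_bilinear Lb
  have hC : ∀ v w : ↥V, |B b (v : X) (w : X)| ≤ C * ‖v‖ * ‖w‖ := fun v w => hC' v w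
  -- uniform bound on solutions
  obtain ⟨M, hM0, hMdef⟩ : ∃ M : ℝ, 0 ≤ M ∧ M = ‖f‖ / α :=
    ⟨‖f‖ / α, div_nonneg (norm_nonneg _) hα.le, rfl⟩
  have hbound : ∀ c ∈ U, ‖T c‖ ≤ M := by
    intro c hc
    have h1 : α * ‖T c‖ ^ 2 ≤ B c (T c) (T c) := (hcoer c hc (T c) (hTmem c hc)).1
    have h2 : B c (T c) (T c) = f (T c) := hTeq c hc (T c) (hTmem c hc)
    have h3 : f (T c) ≤ ‖f‖ * ‖T c‖ :=
      (le_abs_self _).trans (by simpa [Real.norm_eq_abs] using f.le_opNorm (T c))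
    rcases eq_or_lt_of_le (norm_nonneg (T c)) with h0 | h0
    · rw [← h0]; exact hM0
    · rw [hMdef, le_div_iff₀ hα]
      nlinarith
  -- the key quantitative estimate
  set K : ℝ := C * C * M / (α * α) with hKdef
  have hK0 : 0 ≤ K := div_nonneg (mul_nonneg (mul_nonneg hC0 hC0) hM0) (by positivity)
  have key : ∀ ε : ℝ, ε ≠ 0 → a + ε • b ∈ U →
      ‖ε⁻¹ • (T (a + ε • b) - T a) - z‖ ≤ K * |ε| := by
    intro ε hε hmem
    set w : X := T (a + ε • b) with hwdef
    have hwV : w ∈ V := hTmem _ hmem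
    set d : X := w - T a with hddef
    have hdV : d ∈ V := V.sub_mem hwV hTaV
    -- B a d v = -(ε * B b w v)
    have keyd : ∀ v ∈ V, B a d v = -(ε * B b w v) := by
      intro v hv
      have h1 : B (a + ε • b) w v = f v := hTeq _ hmem v hv
      have h2 : B a (T a) v = f v := hTeq a ha v hv
      have h3 : B a w v + ε * B b w v = f v := by
        have heq : B (a + ε • b) w v = B a w v + ε * B b w v := by
          simp [map_add, map_smul, LinearMap.add_apply, LinearMap.smul_apply, smul_eq_mul]
        rw [← heq]; exact h1
      have h4 : B a d v = B a w v - B a (T a) v := by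
        simp [hddef, map_sub]
      rw [h4, h2]
      linarith
    -- bound on ‖d‖
    have hwM : ‖w‖ ≤ M := hbound _ hmem
    have hd_bound : ‖d‖ ≤ |ε| * (C * M) / α := by
      have hc1 : α * ‖d‖ ^ 2 ≤ B a d d := (hcoer a ha d hdV).1
      have hc2 : B a d d = -(ε * B b w d) := keyd d hdV
      have hb : |B b w d| ≤ C * ‖w‖ * ‖d‖ := hC ⟨w, hwV⟩ ⟨d, hdV⟩
      have hb2 : -(ε * B b w d) ≤ |ε| * (C * M * ‖d‖) := by
        have h1 : -(ε * B b w d) ≤ |ε * B b w d| := neg_le_abs _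
        have h2 : |ε * B b w d| = |ε| * |B b w d| := abs_mul _ _
        have h3 : |B b w d| ≤ C * M * ‖d‖ := by
          calc |B b w d| ≤ C * ‖w‖ * ‖d‖ := hb
          _ ≤ C * M * ‖d‖ := by
              apply mul_le_mul_of_nonneg_right _ (norm_nonneg d)
              exact mul_le_mul_of_nonneg_left hwM hC0
        calc -(ε * B b w d) ≤ |ε| * |B b w d| := by rw [← h2]; exact h1
        _ ≤ |ε| * (C * M * ‖d‖) := mul_le_mul_of_nonneg_left h3 (abs_nonneg ε)
      have hmain : α * ‖d‖ ^ 2 ≤ |ε| * (C * M * ‖d‖) := by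
        calc α * ‖d‖ ^ 2 ≤ B a d d := hc1
        _ = -(ε * B b w d) := hc2
        _ ≤ |ε| * (C * M * ‖d‖) := hb2
      rcases eq_or_lt_of_le (norm_nonneg d) with h0 | h0
      · rw [← h0]
        exact div_nonneg (mul_nonneg (abs_nonneg ε) (mul_nonneg hC0 hM0)) hα.le
      · rw [le_div_iff₀ hα]
        nlinarith
    -- the difference quotient
    set q : X := ε⁻¹ • d with hqdef
    have hqV : q ∈ V := V.smul_mem _ hdV
    have hqzV : q - z ∈ V := V.sub_mem hqV hzV
    have keyq : ∀ v ∈ V, B a (q - z) v = -(B b d v) := by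
      intro v hv
      have h1 : B a q v = ε⁻¹ * B a d v := by simp [hqdef, map_smul]
      have h2 : B a d v = -(ε * B b w v) := keyd v hv
      have h3 : B a q v = -(B b w v) := by
        rw [h1, h2]
        field_simp
      have h4 : B a z v = -(B b (T a) v) := hz v hv
      have h5 : B a (q - z) v = B a q v - B a z v := by simp [map_sub]
      have h6 : B b d v = B b w v - B b (T a) v := by simp [hddef, map_sub]
      rw [h5, h3, h4, h6]; ring
    have hc1 : α * ‖q - z‖ ^ 2 ≤ B a (q - z) (q - z) := (hcoer a ha _ hqzV).1
    have hc2 : B a (q - z) (q - z) = -(B b d (q - z)) := keyq _ hqzV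
    have hb : |B b d (q - z)| ≤ C * ‖d‖ * ‖q - z‖ := hC ⟨d, hdV⟩ ⟨q - z, hqzV⟩
    have hmain : α * ‖q - z‖ ^ 2 ≤ C * ‖d‖ * ‖q - z‖ := by
      calc α * ‖q - z‖ ^ 2 ≤ -(B b d (q - z)) := hc2 ▸ hc1
      _ ≤ |B b d (q - z)| := neg_le_abs _
      _ ≤ C * ‖d‖ * ‖q - z‖ := hb
    have hqz : ‖q - z‖ ≤ C * ‖d‖ / α := by
      rcases eq_or_lt_of_le (norm_nonneg (q - z)) with h0 | h0
      · rw [← h0]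
        exact div_nonneg (mul_nonneg hC0 (norm_nonneg d)) hα.le
      · rw [le_div_iff₀ hα]
        nlinarith
    calc ‖q - z‖ ≤ C * ‖d‖ / α := hqz
    _ ≤ C * (|ε| * (C * M) / α) / α := by
        apply div_le_div_of_nonneg_right _ hα.le
        exact mul_le_mul_of_nonneg_left hd_bound hC0
    _ = K * |ε| := by rw [hKdef]; field_simp
  -- eventually in the punctured neighborhood, the bound applies
  have hmem_ev : ∀ᶠ ε : ℝ in nhds 0, a + ε • b ∈ U := by
    have hcont : Continuous fun ε : ℝ => a + ε • b := continuous_const.add (continuous_id.smul continuous_const)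
    have htend0 : Tendsto (fun ε : ℝ => a + ε • b) (nhds 0) (nhds a) := by
      simpa using hcont.tendsto 0
    exact htend0 (hU.mem_nhds ha)
  have hev : ∀ᶠ ε : ℝ in nhdsWithin (0 : ℝ) {0}ᶜ,
      ‖ε⁻¹ • (T (a + ε • b) - T a) - z‖ ≤ K * |ε| := by
    filter_upwards [hmem_ev.filter_mono nhdsWithin_le_nhds, self_mem_nhdsWithin]
      with ε h1 h2
    exact key ε h2 h1
  have htend : Tendsto (fun ε : ℝ => ε⁻¹ • (T (a + ε • b) - T a))
      (nhdsWithin (0 : ℝ) {0}ᶜ) (nhds z) := by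
    rw [tendsto_iff_norm_sub_tendsto_zero]
    apply squeeze_zero' (f := fun ε : ℝ => ‖ε⁻¹ • (T (a + ε • b) - T a) - z‖)
      (g := fun ε : ℝ => K * |ε|)
      (Filter.Eventually.of_forall fun ε => norm_nonneg _) hev
    have : Tendsto (fun ε : ℝ => K * |ε|) (nhds 0) (nhds (K * |0|)) := by
      exact (continuous_const.mul (continuous_abs)).tendsto 0
    simpa using this.mono_left nhdsWithin_le_nhds
  refine ⟨z, hzV, htend, hz, ?_⟩
  have h1 : B a (T a) z = f z := hTeq a ha z hzV
  have h2 : B a z (T a) = -(B b (T a) (T a)) := hz (T a) hTaV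
  rw [← h1, hsym a (T a) z, h2]
end

section
/- Let $X$ be a Hilbert space and let $B_h$ (for $h$ in a directed set tending to $0$) and $B$ be symmetric bilinear forms on $X$, all satisfying the uniform bounds $\alpha\|v\|^2 \le B_h(v,v), B(v,v)$ and $|B_h(v,w)|, |B(v,w)| \le A\|v\|\|w\|$. Suppose $u_h, u \in X$ satisfy $B_h(u_h, u_h) = f(u_h)$ and $B(u,u) = f(u)$ for a fixed $f \in X^*$, that $f(u_h) \to f(u)$, that $B_h(u_h, g_h) = f(g_h)$ for elements $g_h \in X$ with $g_h \to u$ strongly, and that $B_h(u, u) \to B(u,u)$. Then $\|u - u_h\| \to 0$. -/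
open Filter

/-- Abstract strong-convergence argument from the proof of asymptotic
compatibility (Theorem 2.15 of the paper). -/
theorem stmt_11
    {X : Type*} [NormedAddCommGroup X] [InnerProductSpace ℝ X] [CompleteSpace X]
    {ι : Type*} (l : Filter ι) [l.NeBot]
    (Bh : ι → X →ₗ[ℝ] X →ₗ[ℝ] ℝ) (B : X →ₗ[ℝ] X →ₗ[ℝ] ℝ)
    (hsymh : ∀ i (v w : X), Bh i v w = Bh i w v)
    (hsym : ∀ v w : X, B v w = B w v)
    (α A : ℝ) (hα : 0 < α) (hαA : α ≤ A)
    (hcoerh : ∀ i (v : X), α * ‖v‖ ^ 2 ≤ Bh i v v)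
    (hbddh : ∀ i (v w : X), |Bh i v w| ≤ A * ‖v‖ * ‖w‖)
    (hcoer : ∀ v : X, α * ‖v‖ ^ 2 ≤ B v v)
    (hbdd : ∀ v w : X, |B v w| ≤ A * ‖v‖ * ‖w‖)
    (f : X →L[ℝ] ℝ) (u : X) (uh : ι → X) (g : ι → X)
    (h1 : ∀ i, Bh i (uh i) (uh i) = f (uh i))
    (h2 : B u u = f u)
    (h3 : Tendsto (fun i => f (uh i)) l (nhds (f u)))
    (h4 : ∀ i, Bh i (uh i) (g i) = f (g i))
    (h5 : Tendsto g l (nhds u))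
    (h6 : Tendsto (fun i => Bh i u u) l (nhds (B u u))) :
    Tendsto (fun i => ‖u - uh i‖) l (nhds 0) := by
  have hbound : ∀ i, ‖uh i‖ ≤ ‖f‖ / α := by
    intro i
    rcases eq_or_lt_of_le (norm_nonneg (uh i)) with h0 | h0
    · rw [← h0]; positivity
    · rw [le_div_iff₀ hα]
      have h := hcoerh i (uh i)
      rw [h1 i] at h
      have hf : f (uh i) ≤ ‖f‖ * ‖uh i‖ := le_trans (le_abs_self _) (f.le_opNorm _)
      nlinarith
  set C := ‖f‖ / α with hC
  have hCnn : 0 ≤ C := by positivity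
  set R : ι → ℝ := fun i => Bh i u u - 2 * f (g i) + f (uh i) + 2 * (A * C * ‖u - g i‖)
    with hR
  have key : ∀ i, α * ‖u - uh i‖ ^ 2 ≤ R i := by
    intro i
    have expand : Bh i (u - uh i) (u - uh i)
        = Bh i u u - 2 * Bh i (uh i) u + f (uh i) := by
      simp only [map_sub, LinearMap.sub_apply, hsymh i u (uh i), h1 i]
      ring
    have split : Bh i (uh i) u = f (g i) + Bh i (uh i) (u - g i) := by
      have hsub : Bh i (uh i) (u - g i) = Bh i (uh i) u - Bh i (uh i) (g i) := by
        simp [map_sub]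
      rw [hsub, h4 i]; ring
    have err : -(A * C * ‖u - g i‖) ≤ Bh i (uh i) (u - g i) := by
      have h := (abs_le.mp (hbddh i (uh i) (u - g i))).1
      have hA : 0 < A := lt_of_lt_of_le hα hαA
      have hb : A * ‖uh i‖ * ‖u - g i‖ ≤ A * C * ‖u - g i‖ := by
        nlinarith [mul_nonneg (mul_nonneg hA.le (sub_nonneg.mpr (hbound i))) (norm_nonneg (u - g i))]
      linarith
    have hco := hcoerh i (u - uh i)
    rw [expand, split] at hco
    simp only [hR]
    linarith
  have hRlim : Tendsto R l (nhds 0) := by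
    have hgu : Tendsto (fun i => ‖u - g i‖) l (nhds 0) := by
      have h : Tendsto (fun i => u - g i) l (nhds (u - u)) :=
        tendsto_const_nhds.sub h5
      rw [sub_self] at h
      simpa using h.norm
    have hfg : Tendsto (fun i => f (g i)) l (nhds (f u)) :=
      (f.continuous.tendsto u).comp h5
    have hlim : Tendsto R l (nhds (B u u - 2 * f u + f u + 2 * (A * C * 0))) :=
      ((h6.sub (hfg.const_mul 2)).add h3).add ((hgu.const_mul (A * C)).const_mul 2)
    have heq : B u u - 2 * f u + f u + 2 * (A * C * 0) = 0 := by rw [h2]; ring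
    rwa [heq] at hlim
  have hsq : Tendsto (fun i => ‖u - uh i‖ ^ 2) l (nhds 0) := by
    have h0 : Tendsto (fun i => α * ‖u - uh i‖ ^ 2) l (nhds 0) :=
      tendsto_of_tendsto_of_tendsto_of_le_of_le tendsto_const_nhds hRlim
        (fun i => by positivity) key
    have h1' := h0.const_mul α⁻¹
    simpa [← mul_assoc, inv_mul_cancel₀ hα.ne'] using h1'
  have hfin := hsq.sqrt
  simpa [Real.sqrt_sq (norm_nonneg _)] using hfin
end

section
/- Let $X$ be a Hilbert space, and suppose symmetric bilinear forms $B_j$, $B$ on $X$ satisfy the uniform bounds $\alpha\|v\|^2 \le B_j(v,v)$, $|B_j(v,w)| \le A\|v\|\|w\|$ (same for $B$), and the pointwise convergence $B_j(v,v) \to B(v,v)$ for every $v \in X$. Let $f \in X^*$ and let $u_j, u \in X$ solve $B_j(u_j, v) = f(v)$ and $B(u,v) = f(v)$ for all $v \in X$. Then $f(u) \le \liminf_{j\to\infty} f(u_j)$. -/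
open Filter

/-- Key inequality from the proof of Theorem 2.4: lower semicontinuity of the
compliance under pointwise convergence of the bilinear forms. -/
theorem stmt_16
    {X : Type*} [NormedAddCommGroup X] [InnerProductSpace ℝ X] [CompleteSpace X]
    (Bj : ℕ → X →ₗ[ℝ] X →ₗ[ℝ] ℝ) (B : X →ₗ[ℝ] X →ₗ[ℝ] ℝ)
    (hsymj : ∀ j (v w : X), Bj j v w = Bj j w v)
    (hsym : ∀ v w : X, B v w = B w v)
    (α A : ℝ) (hα : 0 < α) (hαA : α ≤ A)
    (hcoerj : ∀ j (v : X), α * ‖v‖ ^ 2 ≤ Bj j v v)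
    (hbddj : ∀ j (v w : X), |Bj j v w| ≤ A * ‖v‖ * ‖w‖)
    (hcoer : ∀ v : X, α * ‖v‖ ^ 2 ≤ B v v)
    (hbdd : ∀ v w : X, |B v w| ≤ A * ‖v‖ * ‖w‖)
    (hptwise : ∀ v : X, Tendsto (fun j => Bj j v v) atTop (nhds (B v v)))
    (f : X →L[ℝ] ℝ) (uj : ℕ → X) (u : X)
    (huj : ∀ j, ∀ v : X, Bj j (uj j) v = f v)
    (hu : ∀ v : X, B u v = f v) :
    f u ≤ Filter.atTop.liminf (fun j => f (uj j)) := by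
  -- Key pointwise inequality: 2 f u - Bj j u u ≤ f (uj j)
  have key : ∀ j, 2 * f u - Bj j u u ≤ f (uj j) := by
    intro j
    have h0 : 0 ≤ Bj j (u - uj j) (u - uj j) := by
      have := hcoerj j (u - uj j)
      nlinarith [sq_nonneg ‖u - uj j‖]
    have hexp : Bj j (u - uj j) (u - uj j)
        = Bj j u u - 2 * f u + f (uj j) := by
      have h1 : Bj j (uj j) u = f u := huj j u
      have h2 : Bj j (uj j) (uj j) = f (uj j) := huj j (uj j)
      have h3 : Bj j u (uj j) = f u := by rw [hsymj j u (uj j)]; exact h1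
      simp only [map_sub, LinearMap.sub_apply]
      linarith
    linarith
  -- lower bound sequence converges to f u
  have hg : Tendsto (fun j => 2 * f u - Bj j u u) atTop (nhds (f u)) := by
    have := (hptwise u)
    have h2 : Tendsto (fun j => 2 * f u - Bj j u u) atTop (nhds (2 * f u - B u u)) :=
      (tendsto_const_nhds.sub this)
    have : B u u = f u := hu u
    rw [this] at h2
    convert h2 using 2
    ring
  have hgl : Filter.atTop.liminf (fun j => 2 * f u - Bj j u u) = f u := hg.liminf_eq
  rw [← hgl]
  refine liminf_le_liminf (Eventually.of_forall key) hg.isBoundedUnder_ge ?_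
  -- f (uj j) is bounded above by ‖f‖^2 / α
  refine Filter.isCoboundedUnder_ge_of_le atTop (x := ‖f‖ * (‖f‖ / α)) ?_
  intro j
  have h1 : f (uj j) = Bj j (uj j) (uj j) := (huj j (uj j)).symm
  have h2 : α * ‖uj j‖ ^ 2 ≤ Bj j (uj j) (uj j) := hcoerj j (uj j)
  have h3 : f (uj j) ≤ ‖f‖ * ‖uj j‖ := le_trans (le_abs_self _) (f.le_opNorm _)
  have hub : ‖uj j‖ ≤ ‖f‖ / α := by
    rcases eq_or_lt_of_le (norm_nonneg (uj j)) with h | h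
    · rw [← h]; positivity
    · rw [le_div_iff₀ hα]
      nlinarith
  nlinarith [norm_nonneg f]
end
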